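/- arXiv:0911.4549 — 2 statements merged into one kernel-verified Lean document; each statement's English description precedes it below -/
import Mathlib

section
/- Assume the basic assumption and let 0<ρ≤ρ₀≤3. There is a constant C>1 depending only on n such that for every 0<σ<1, every z∈M_{(1−σ)ρ} and every ζ∈∂M_ρ, one has |ζⁿ−zⁿ| ≥ C⁻¹ρ²σ. -/
open Complex MeasureTheory Set
open scoped BigOperators

noncomputable section

/-- Points of `ℝ^{2n-1} ≅ ℂ^{n-1} × ℝ` (we write `m = n - 1`). -/
abbrev Pt (m : ℕ) := (Fin m → ℂ) × ℝ

/-- Points of `ℂⁿ`, written `(z', zⁿ)` with `z' ∈ ℂ^{n-1}`. -/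
abbrev Cpt (m : ℕ) := (Fin m → ℂ) × ℂ

/-- The Euclidean norm on `ℝ^{2n-1} ≅ ℂ^{n-1} × ℝ`. -/
def pnorm {m : ℕ} (ξ : Pt m) : ℝ :=
  Real.sqrt ((∑ j, ‖ξ.1 j‖ ^ 2) + ξ.2 ^ 2)

/-- The Euclidean norm on `ℂⁿ`. -/
def znorm {m : ℕ} (z : Cpt m) : ℝ :=
  Real.sqrt ((∑ j, ‖z.1 j‖ ^ 2) + ‖z.2‖ ^ 2)

/-- The Euclidean norm on `ℂ^{n-1}`. -/
def cnorm {m : ℕ} (v : Fin m → ℂ) : ℝ := Real.sqrt (∑ j, ‖v j‖ ^ 2)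

/-- The projection `π(z) = (z', Re zⁿ)`. -/
def projP {m : ℕ} (z : Cpt m) : Pt m := (z.1, z.2.re)

/-- The defining function `r(z) = -yⁿ + |z'|² + r̂(π z)`. -/
def rfn {m : ℕ} (rh : Pt m → ℝ) (z : Cpt m) : ℝ :=
  -z.2.im + (∑ j, ‖z.1 j‖ ^ 2) + rh (projP z)

/-- The hypersurface `M`: the graph `yⁿ = |z'|² + r̂(z', xⁿ)` over `D`. -/
def Mset {m : ℕ} (D : Set (Pt m)) (rh : Pt m → ℝ) : Set (Cpt m) :=
  {z | projP z ∈ D ∧ z.2.im = (∑ j, ‖z.1 j‖ ^ 2) + rh (projP z)}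

/-- `M_ρ = M ∩ {(xⁿ)² + yⁿ < ρ²}`. -/
def MRho {m : ℕ} (D : Set (Pt m)) (rh : Pt m → ℝ) (ρ : ℝ) : Set (Cpt m) :=
  {z ∈ Mset D rh | z.2.re ^ 2 + z.2.im < ρ ^ 2}

/-- `∂M_ρ = M ∩ {(xⁿ)² + yⁿ = ρ²}`. -/
def bMRho {m : ℕ} (D : Set (Pt m)) (rh : Pt m → ℝ) (ρ : ℝ) : Set (Cpt m) :=
  {z ∈ Mset D rh | z.2.re ^ 2 + z.2.im = ρ ^ 2}

/-- `D_ρ = π(M_ρ) = {(z',xⁿ) ∈ D : |z'|² + (xⁿ)² + r̂(z',xⁿ) < ρ²}`. -/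
def DRho {m : ℕ} (D : Set (Pt m)) (rh : Pt m → ℝ) (ρ : ℝ) : Set (Pt m) :=
  {ξ ∈ D | (∑ j, ‖ξ.1 j‖ ^ 2) + ξ.2 ^ 2 + rh ξ < ρ ^ 2}

/-- The open Euclidean ball `B_ρ ⊆ ℝ^{2n-1}` centered at `0`. -/
def ballP (m : ℕ) (ρ : ℝ) : Set (Pt m) := {ξ | pnorm ξ < ρ}

/-- `Σ_j ∂_{z^j} f(z) v^j = (df(z)[v] - i·df(z)[i•v])/2`, with the real Fréchet
derivative; this encodes the Wirtinger derivatives `∂_{z^j} = ½(∂_{x^j} - i ∂_{y^j})`. -/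
def wirt {m : ℕ} (f : Cpt m → ℝ) (z v : Cpt m) : ℂ :=
  (((fderiv ℝ f z v : ℝ) : ℂ) - Complex.I * ((fderiv ℝ f z ((Complex.I : ℂ) • v) : ℝ) : ℂ)) / 2

/-- `r_w·(ζ - z) = Σ_j ∂_{w^j} r(w) (ζ^j - z^j)` (derivatives of `r` taken at `w`). -/
def rdot {m : ℕ} (rh : Pt m → ℝ) (w ζ z : Cpt m) : ℂ := wirt (rfn rh) w (ζ - z)

/-- The set of values `‖∂^j r̂(x)‖`, `j ≤ 2`, `x ∈ s` (derivatives taken within `D`);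
its supremum is the `C²`-norm of `r̂` on `s`. -/
def c2Set {m : ℕ} (rh : Pt m → ℝ) (D s : Set (Pt m)) : Set ℝ :=
  {y | ∃ x ∈ s, ∃ j ≤ 2, y = ‖iteratedFDerivWithin ℝ j rh D x‖}

/-- The basic assumption: `D` is a domain, `r̂ ∈ C²(D)`, `0 < ρ₀ ≤ 3`,
`closure D_{ρ₀} ⊆ D`, `r̂(0) = 0`, `dr̂(0) = 0`, and `ε = ‖r̂‖_{C²(D_{ρ₀})} < 1/C₀`. -/
structure Basic (m : ℕ) (D : Set (Pt m)) (rh : Pt m → ℝ) (ρ₀ C₀ : ℝ) : Prop where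
  openD : IsOpen D
  connD : IsConnected D
  smooth : ContDiffOn ℝ 2 rh D
  rho0_pos : 0 < ρ₀
  rho0_le : ρ₀ ≤ 3
  closure_sub : closure (DRho D rh ρ₀) ⊆ D
  mem0 : (0 : Pt m) ∈ D
  rh0 : rh 0 = 0
  drh0 : fderivWithin ℝ rh D 0 = 0
  bdd : BddAbove (c2Set rh D (DRho D rh ρ₀))
  small : sSup (c2Set rh D (DRho D rh ρ₀)) < 1 / C₀

/-- The graph point of `M` above `ξ = (z', xⁿ)`. -/
def graphPt {m : ℕ} (rh : Pt m → ℝ) (ξ : Pt m) : Cpt m :=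
  (ξ.1, (ξ.2 : ℂ) + Complex.I * (((∑ j, ‖ξ.1 j‖ ^ 2) + rh ξ : ℝ) : ℂ))

/-- The approximate Heisenberg transformation `ψ_z(ζ) = (ζ' - z', -2i r_z·(ζ-z))`. -/
def psiMap {m : ℕ} (rh : Pt m → ℝ) (z ζ : Cpt m) : Cpt m :=
  (ζ.1 - z.1, (-2) * Complex.I * rdot rh z ζ z)

/-- `ψ̃_x(ξ) = π(ψ_z(ζ))` where `ζ, z ∈ M` lie over `ξ, x`. -/
def psiT {m : ℕ} (rh : Pt m → ℝ) (x ξ : Pt m) : Pt m :=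
  projP (psiMap rh (graphPt rh x) (graphPt rh ξ))

/-- `Ψ(ξ, x) = (ψ̃_x(ξ), x)`. -/
def PsiMap {m : ℕ} (rh : Pt m → ℝ) (p : Pt m × Pt m) : Pt m × Pt m :=
  (psiT rh p.2 p.1, p.2)

end

/-! The gauge `(xⁿ)² + yⁿ` rises by at least `ρ²σ` from `z ∈ M_{(1-σ)ρ}` to `ζ ∈ ∂M_ρ`.
For `|ζⁿ - zⁿ| ≤ 1` its increment is at most `(2|Re zⁿ| + 2)|ζⁿ - zⁿ|`, and `|Re zⁿ| ≤ 4`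
on `M_ρ`, since there `yⁿ = |z'|² + r̂ ≥ -ε > -1` and `ρ ≤ 3`. -/

/-- `M_ρ` and `∂M_ρ` are the sublevel and level sets of `(xⁿ)² + yⁿ`. -/
def rhoGauge (w : ℂ) : ℝ := w.re ^ 2 + w.im

lemma rhoGauge_sub_rhoGauge_le (w₁ w₂ : ℂ) :
    rhoGauge w₁ - rhoGauge w₂ ≤ (‖w₁ - w₂‖ + 2 * |w₂.re| + 1) * ‖w₁ - w₂‖ := by
  set t := ‖w₁ - w₂‖
  have hre : |w₁.re - w₂.re| ≤ t := by simpa using Complex.abs_re_le_norm (w₁ - w₂)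
  have him : |w₁.im - w₂.im| ≤ t := by simpa using Complex.abs_im_le_norm (w₁ - w₂)
  have hsq : (w₁.re - w₂.re) ^ 2 ≤ t ^ 2 := sq_le_sq' (abs_le.mp hre).1 (abs_le.mp hre).2
  have hcross : w₂.re * (w₁.re - w₂.re) ≤ |w₂.re| * t := by
    calc w₂.re * (w₁.re - w₂.re) ≤ |w₂.re * (w₁.re - w₂.re)| := le_abs_self _
      _ = |w₂.re| * |w₁.re - w₂.re| := abs_mul _ _
      _ ≤ |w₂.re| * t := mul_le_mul_of_nonneg_left hre (abs_nonneg _)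
  have hexpand : rhoGauge w₁ - rhoGauge w₂
      = (w₁.re - w₂.re) ^ 2 + 2 * (w₂.re * (w₁.re - w₂.re)) + (w₁.im - w₂.im) := by
    simp only [rhoGauge]; ring
  rw [hexpand]
  nlinarith [(abs_le.mp him).2]

lemma rhoGauge_gap_of_mem_MRho_of_mem_bMRho {m : ℕ} {D : Set (Pt m)} {rh : Pt m → ℝ}
    {ρ σ : ℝ} (hσ : 0 ≤ σ) (hσ1 : σ ≤ 1) {z ζ : Cpt m}
    (hz : z ∈ MRho D rh ((1 - σ) * ρ)) (hζ : ζ ∈ bMRho D rh ρ) :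
    ρ ^ 2 * σ ≤ rhoGauge ζ.2 - rhoGauge z.2 := by
  have hz' : rhoGauge z.2 < ((1 - σ) * ρ) ^ 2 := hz.2
  have hζ' : rhoGauge ζ.2 = ρ ^ 2 := hζ.2
  nlinarith [mul_nonneg (mul_nonneg (sq_nonneg ρ) hσ) (sub_nonneg.mpr hσ1)]

lemma abs_le_sSup_c2Set {m : ℕ} {rh : Pt m → ℝ} {D s : Set (Pt m)}
    (hbdd : BddAbove (c2Set rh D s)) {x : Pt m} (hx : x ∈ s) :
    |rh x| ≤ sSup (c2Set rh D s) :=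
  le_csSup hbdd ⟨x, hx, 0, zero_le_two, by
    rw [norm_iteratedFDerivWithin_zero, Real.norm_eq_abs]⟩

lemma projP_mem_DRho_of_mem_MRho {m : ℕ} {D : Set (Pt m)} {rh : Pt m → ℝ}
    {ρ ρ₀ : ℝ} (hρ : 0 ≤ ρ) (hρρ₀ : ρ ≤ ρ₀) {z : Cpt m} (hz : z ∈ MRho D rh ρ) :
    projP z ∈ DRho D rh ρ₀ := by
  obtain ⟨⟨hzD, hzim⟩, hzlt⟩ := hz
  refine ⟨hzD, ?_⟩
  have : ρ ^ 2 ≤ ρ₀ ^ 2 := pow_le_pow_left₀ hρ hρρ₀ 2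
  simp only [projP] at hzim ⊢
  linarith

lemma Basic.abs_re_le_four {m : ℕ} {D : Set (Pt m)} {rh : Pt m → ℝ} {ρ₀ C₀ : ℝ}
    (hB : Basic m D rh ρ₀ C₀) (hC₀ : 1 ≤ C₀) {ρ : ℝ} (hρ : 0 ≤ ρ) (hρρ₀ : ρ ≤ ρ₀)
    {z : Cpt m} (hz : z ∈ MRho D rh ρ) :
    |z.2.re| ≤ 4 := by
  have hsmall : sSup (c2Set rh D (DRho D rh ρ₀)) < 1 :=
    hB.small.trans_le (div_le_one_of_le₀ hC₀ (by linarith))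
  have hrh := abs_le_sSup_c2Set hB.bdd (projP_mem_DRho_of_mem_MRho hρ hρρ₀ hz)
  have hsum : (0 : ℝ) ≤ ∑ j, ‖z.1 j‖ ^ 2 := Finset.sum_nonneg fun j _ => sq_nonneg _
  have him : -1 ≤ z.2.im := by
    rw [hz.1.2]
    linarith [(abs_le.mp (hrh.trans hsmall.le)).1]
  have hρ3 : ρ ^ 2 ≤ 3 ^ 2 := pow_le_pow_left₀ hρ (hρρ₀.trans hB.rho0_le) 2
  have hre : z.2.re ^ 2 ≤ 4 ^ 2 := by linarith [hz.2]
  exact abs_le_of_sq_le_sq' hre (by norm_num) |> abs_le.mpr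

/-- Under the basic assumption and `0 < ρ ≤ ρ₀ ≤ 3`, there is `C > 1`
depending only on `n = m + 1` such that for every `0 < σ < 1`, every
`z ∈ M_{(1-σ)ρ}` and every `ζ ∈ ∂M_ρ`, one has `|ζⁿ - zⁿ| ≥ C⁻¹ρ²σ`. -/
theorem statement_4 (m : ℕ) :
    ∃ C₀ > (1 : ℝ), ∃ C > (1 : ℝ),
      ∀ (D : Set (Pt m)) (rh : Pt m → ℝ) (ρ₀ : ℝ), Basic m D rh ρ₀ C₀ →
        ∀ ρ : ℝ, 0 < ρ → ρ ≤ ρ₀ → ∀ σ : ℝ, 0 < σ → σ < 1 →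
          ∀ z ∈ MRho D rh ((1 - σ) * ρ), ∀ ζ ∈ bMRho D rh ρ,
            C⁻¹ * ρ ^ 2 * σ ≤ ‖ζ.2 - z.2‖ := by
  refine ⟨2, by norm_num, 10, by norm_num, ?_⟩
  intro D rh ρ₀ hB ρ hρ hρρ₀ σ hσ hσ1 z hz ζ hζ
  have hgap := rhoGauge_gap_of_mem_MRho_of_mem_bMRho hσ.le hσ1.le hz hζ
  have hre : |z.2.re| ≤ 4 :=
    hB.abs_re_le_four one_le_two (by nlinarith) (by nlinarith) hz
  have hlip := rhoGauge_sub_rhoGauge_le ζ.2 z.2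
  have hρ3 : ρ ^ 2 * σ ≤ 9 := by nlinarith [hρρ₀.trans hB.rho0_le]
  have ht := norm_nonneg (ζ.2 - z.2)
  suffices ρ ^ 2 * σ ≤ 10 * ‖ζ.2 - z.2‖ by linarith
  rcases le_or_gt 1 ‖ζ.2 - z.2‖ with h | h
  · linarith
  · nlinarith
end

section
/- Let D⊂ℝ^m be a bounded domain satisfying condition (i) of the cone property with constant C_*. There exist constants C₀,C>1, depending only on m and C_*, such that: if f:D→ℝ^m is of class C¹ with |f'(x)−Id|<1/C₀ for all x∈D (f' denoting the Jacobian matrix and |·| the maximum of absolute values of entries), then f is a C¹ diffeomorphism from D onto D'=f(D), one has ½|p₁−p₀| ≤ |f(p₁)−f(p₀)| ≤ 2|p₁−p₀| for all p₀,p₁∈D, and ‖f⁻¹−id‖_{D',1} ≤ C‖f−id‖_{D,1}. -/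
open Set
open scoped BigOperators Classical

noncomputable section

/-- Euclidean space `ℝ^m`. -/
abbrev E (m : ℕ) := EuclideanSpace ℝ (Fin m)

/-- The cone with vertex `0`, unit axis `v`, opening `θ` and height `h`:
`{t : v·t > θ⁻¹ |t - (v·t)v|, v·t < h}`. -/
def coneAt {m : ℕ} (v : E m) (θ h : ℝ) : Set (E m) :=
  {t | θ⁻¹ * ‖t - (inner ℝ v t : ℝ) • v‖ < (inner ℝ v t : ℝ) ∧ (inner ℝ v t : ℝ) < h}

/-- Part (i) of the cone property: `diam D < C_*`, and any two points of `D` can be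
joined by a piecewise-`C¹` curve in `D` with speed `≤ C_* |p₁ - p₀|`. -/
def ConePropI {m : ℕ} (D : Set (E m)) (Cs : ℝ) : Prop :=
  Metric.diam D < Cs ∧
  ∀ p₀ ∈ D, ∀ p₁ ∈ D, ∃ γ : ℝ → E m, ∃ F : Finset ℝ,
    γ 0 = p₀ ∧ γ 1 = p₁ ∧ ContinuousOn γ (Set.Icc 0 1) ∧
    (∀ t ∈ Set.Icc (0 : ℝ) 1, γ t ∈ D) ∧
    ∀ t ∈ Set.Icc (0 : ℝ) 1, t ∉ F →
      ∃ dγ : E m, HasDerivAt γ dγ t ∧ ‖dγ‖ ≤ Cs * ‖p₁ - p₀‖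

/-- Part (ii) of the cone property: every point of the closure of `D` is the vertex of
a cone contained in `D` with opening `> C_*⁻¹` and height `> C_*⁻¹`. -/
def ConePropII {m : ℕ} (D : Set (E m)) (Cs : ℝ) : Prop :=
  ∀ x ∈ closure D, ∃ v : E m, ‖v‖ = 1 ∧ ∃ θ > Cs⁻¹, ∃ h > Cs⁻¹,
    (fun t => x + t) '' coneAt v θ h ⊆ D

/-- The cone property with constant `C_*`. -/
def ConeProp {m : ℕ} (D : Set (E m)) (Cs : ℝ) : Prop :=
  ConePropI D Cs ∧ ConePropII D Cs

/-- The set of values `‖∂^j u(x)‖`, `j ≤ k`, `x ∈ s` (derivatives within `s`);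
its supremum is `‖u‖_{s,k}`. -/
def ckSet {m : ℕ} {F : Type*} [NormedAddCommGroup F] [NormedSpace ℝ F]
    (f : E m → F) (s : Set (E m)) (k : ℕ) : Set ℝ :=
  {r | ∃ j ≤ k, ∃ x ∈ s, r = ‖iteratedFDerivWithin ℝ j f s x‖}

/-- The set of Hölder ratios `‖f x - f y‖ / |x - y|^α`, `x ≠ y` in `s`;
its supremum is the seminorm `|f|_{s,α}`. -/
def hratioSet {m : ℕ} {G : Type*} [NormedAddCommGroup G]
    (f : E m → G) (s : Set (E m)) (α : ℝ) : Set ℝ :=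
  {r | ∃ x ∈ s, ∃ y ∈ s, x ≠ y ∧ r = ‖f x - f y‖ / ‖x - y‖ ^ α}

/-- The defining set of the Hölder norm `‖u‖_{s,a}`: for integer `a` the values of
derivatives of order `≤ a`; otherwise, in addition, the Hölder-`(a - ⌊a⌋)` ratios of
the derivatives of order `⌊a⌋`. -/
def hNormSet {m : ℕ} {F : Type*} [NormedAddCommGroup F] [NormedSpace ℝ F]
    (f : E m → F) (s : Set (E m)) (a : ℝ) : Set ℝ :=
  if a = (⌊a⌋ : ℝ) then ckSet f s ⌊a⌋.toNat
  else ckSet f s ⌊a⌋.toNat ∪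
    hratioSet (iteratedFDerivWithin ℝ ⌊a⌋.toNat f s) s (a - (⌊a⌋ : ℝ))

/-- The Hölder norm `‖u‖_{s,a}`. -/
def hNorm {m : ℕ} {F : Type*} [NormedAddCommGroup F] [NormedSpace ℝ F]
    (f : E m → F) (s : Set (E m)) (a : ℝ) : ℝ :=
  sSup (hNormSet f s a)

/-- The defining set of the Hölder seminorm `|u|_{s,a}` for `k < a ≤ k+1`,
`k = ⌈a⌉ - 1`: the Hölder-`(a-k)` ratios of the derivatives of order `k`. -/
def hSemiSet {m : ℕ} {F : Type*} [NormedAddCommGroup F] [NormedSpace ℝ F]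
    (f : E m → F) (s : Set (E m)) (a : ℝ) : Set ℝ :=
  hratioSet (iteratedFDerivWithin ℝ (⌈a⌉ - 1).toNat f s) s (a - ((⌈a⌉ : ℝ) - 1))

/-- The Hölder seminorm `|u|_{s,a}`. -/
def hSemi {m : ℕ} {F : Type*} [NormedAddCommGroup F] [NormedSpace ℝ F]
    (f : E m → F) (s : Set (E m)) (a : ℝ) : ℝ :=
  sSup (hSemiSet f s a)

end

noncomputable section

/-! Integrating `f' - Id` along the curves of part (i) of the cone property shows that `f - id`
is `C_* / C₀`-Lipschitz on `D`; with `C₀ = 2 C_*` this gives the bi-Lipschitz bounds and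
injectivity. Each `f'(x)` lies within `1/2` of the identity, so it is invertible with
`‖f'(x)⁻¹ - Id‖ ≤ 2 ‖f'(x) - Id‖`, and the inverse function theorem makes `f⁻¹` a `C¹` map on the
open set `f(D)` with derivative `f'(x)⁻¹` at `f(x)`. As `f⁻¹(y) - y = -(f(x) - x)` for `y = f(x)`,
this gives `‖f⁻¹ - id‖_{f(D),1} ≤ 2 ‖f - id‖_{D,1}`. -/

open Function

section MeanValue

variable {V : Type*} [NormedAddCommGroup V] [NormedSpace ℝ V] {g : ℝ → V} {a b K : ℝ}

theorem norm_image_sub_le_of_norm_hasDerivAt_le_Ioo (hab : a ≤ b) (hK : 0 ≤ K)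
    (hg : ContinuousOn g (Icc a b)) (hd : ∀ t ∈ Ioo a b, ∃ d, HasDerivAt g d t ∧ ‖d‖ ≤ K) :
    ‖g b - g a‖ ≤ K * (b - a) := by
  rcases hab.eq_or_lt with rfl | hlt
  · simp
  choose! g' hg' hg'K using hd
  have hLip : LipschitzOnWith K.toNNReal g (Ioo a b) :=
    (convex_Ioo a b).lipschitzOnWith_of_nnnorm_hasDerivWithin_le
      (fun t ht => (hg' t ht).hasDerivWithinAt)
      (fun t ht => by rw [← NNReal.coe_le_coe, coe_nnnorm, Real.coe_toNNReal K hK]; exact hg'K t ht)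
  rw [← closure_Ioo hlt.ne] at hg
  have hab' : a ∈ closure (Ioo a b) ∧ b ∈ closure (Ioo a b) := by simp [closure_Ioo hlt.ne, hab]
  have := (hLip.closure hg).norm_sub_le hab'.2 hab'.1
  rwa [Real.coe_toNNReal K hK, Real.norm_of_nonneg (sub_nonneg.2 hab)] at this

theorem norm_image_sub_le_of_norm_hasDerivAt_le_off_finset (F : Finset ℝ) (hab : a ≤ b)
    (hK : 0 ≤ K) (hg : ContinuousOn g (Icc a b))
    (hd : ∀ t ∈ Ioo a b, t ∉ F → ∃ d, HasDerivAt g d t ∧ ‖d‖ ≤ K) :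
    ‖g b - g a‖ ≤ K * (b - a) := by
  induction F using Finset.induction_on generalizing a b with
  | empty =>
    exact norm_image_sub_le_of_norm_hasDerivAt_le_Ioo hab hK hg fun t ht => hd t ht (by simp)
  | insert c F _ ih =>
    by_cases hc : c ∈ Ioo a b
    · have hac := ih hc.1.le (hg.mono (Icc_subset_Icc_right hc.2.le))
        fun t ht htF => hd t ⟨ht.1, ht.2.trans hc.2⟩ (by simp [ht.2.ne, htF])
      have hcb := ih hc.2.le (hg.mono (Icc_subset_Icc_left hc.1.le))
        fun t ht htF => hd t ⟨hc.1.trans ht.1, ht.2⟩ (by simp [ht.1.ne', htF])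
      calc ‖g b - g a‖ ≤ ‖g b - g c‖ + ‖g c - g a‖ := norm_sub_le_norm_sub_add_norm_sub _ _ _
        _ ≤ K * (b - c) + K * (c - a) := add_le_add hcb hac
        _ = K * (b - a) := by ring
    · exact ih hab hg fun t ht htF => hd t ht <| by
        simpa only [Finset.mem_insert, not_or] using ⟨fun h => hc (h ▸ ht), htF⟩

end MeanValue

theorem ConePropI.norm_image_sub_le_of_norm_fderiv_le {m : ℕ} {F : Type*} [NormedAddCommGroup F]
    [NormedSpace ℝ F] {D : Set (E m)} {Cs L : ℝ} {u : E m → F} (hCP : ConePropI D Cs)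
    (hu : ∀ x ∈ D, DifferentiableAt ℝ u x) (bound : ∀ x ∈ D, ‖fderiv ℝ u x‖ ≤ L)
    {x y : E m} (hx : x ∈ D) (hy : y ∈ D) :
    ‖u y - u x‖ ≤ Cs * L * ‖y - x‖ := by
  obtain ⟨γ, T, hγ0, hγ1, hγc, hγD, hγd⟩ := hCP.2 x hx y hy
  have hCs : 0 ≤ Cs := Metric.diam_nonneg.trans hCP.1.le
  have hL : 0 ≤ L := (norm_nonneg _).trans (bound x hx)
  have hu_cont : ContinuousOn u D := fun z hz => (hu z hz).continuousAt.continuousWithinAt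
  have hd : ∀ t ∈ Ioo (0 : ℝ) 1, t ∉ T →
      ∃ d, HasDerivAt (u ∘ γ) d t ∧ ‖d‖ ≤ L * (Cs * ‖y - x‖) := by
    intro t ht htF
    obtain ⟨dγ, hdγ, hdγK⟩ := hγd t (Ioo_subset_Icc_self ht) htF
    have hγt := hγD t (Ioo_subset_Icc_self ht)
    exact ⟨fderiv ℝ u (γ t) dγ, (hu _ hγt).hasFDerivAt.comp_hasDerivAt t hdγ,
      ((fderiv ℝ u (γ t)).le_opNorm dγ).trans (mul_le_mul (bound _ hγt) hdγK (norm_nonneg _) hL)⟩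
  have := norm_image_sub_le_of_norm_hasDerivAt_le_off_finset T zero_le_one (by positivity)
    (hu_cont.comp hγc hγD) hd
  simp only [comp_apply, hγ0, hγ1] at this
  linarith

theorem LipschitzOnWith.half_mul_norm_sub_le_and_norm_sub_le_two_mul {V : Type*}
    [SeminormedAddCommGroup V] {f : V → V} {s : Set V}
    (hf : LipschitzOnWith (1 / 2) (fun x => f x - x) s) {x y : V} (hx : x ∈ s) (hy : y ∈ s) :
    1 / 2 * ‖y - x‖ ≤ ‖f y - f x‖ ∧ ‖f y - f x‖ ≤ 2 * ‖y - x‖ := by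
  have h := hf.norm_sub_le hy hx
  rw [sub_sub_sub_comm] at h
  push_cast at h
  constructor
  · linarith [norm_sub_norm_le (y - x) (f y - f x), norm_sub_rev (y - x) (f y - f x)]
  · linarith [norm_le_insert' (f y - f x) (y - x), norm_nonneg (y - x)]

theorem LipschitzOnWith.injOn_of_sub_id {V : Type*} [NormedAddCommGroup V] {f : V → V}
    {s : Set V} {K : NNReal} (hf : LipschitzOnWith K (fun x => f x - x) s) (hK : K < 1) :
    InjOn f s := fun x hx y hy hxy => by
  have h := hf.norm_sub_le hx hy
  rw [hxy, sub_sub_sub_cancel_left, norm_sub_rev] at h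
  by_contra hne
  exact (mul_lt_of_lt_one_left (norm_pos_iff.2 (sub_ne_zero.2 hne)) hK).not_ge h

section NearIdentity

variable {𝕜 V : Type*} [NontriviallyNormedField 𝕜] [NormedAddCommGroup V] [NormedSpace 𝕜 V]

theorem HasFDerivAt.sub_id {f : V → V} {f' : V →L[𝕜] V} {x : V} (hf : HasFDerivAt f f' x) :
    HasFDerivAt (fun y => f y - y) (f' - ContinuousLinearMap.id 𝕜 V) x :=
  hf.sub (hasFDerivAt_id x)

theorem ContinuousLinearMap.exists_equiv_of_norm_sub_id_lt_one [CompleteSpace V]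
    (A : V →L[𝕜] V) (hA : ‖A - ContinuousLinearMap.id 𝕜 V‖ < 1) :
    ∃ e : V ≃L[𝕜] V, (e : V →L[𝕜] V) = A :=
  ⟨.ofUnit (Units.oneSub (1 - A) (by rwa [norm_sub_rev])), by
    ext x; change (1 - (1 - A)) x = A x; simp⟩

theorem ContinuousLinearEquiv.norm_symm_sub_id_le (e : V ≃L[𝕜] V)
    (he : ‖(e : V →L[𝕜] V) - ContinuousLinearMap.id 𝕜 V‖ ≤ 1 / 2) :
    ‖(e.symm : V →L[𝕜] V) - ContinuousLinearMap.id 𝕜 V‖ ≤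
      2 * ‖(e : V →L[𝕜] V) - ContinuousLinearMap.id 𝕜 V‖ := by
  have hfactor : (e.symm : V →L[𝕜] V) - ContinuousLinearMap.id 𝕜 V
      = (e.symm : V →L[𝕜] V).comp (ContinuousLinearMap.id 𝕜 V - (e : V →L[𝕜] V)) := by
    ext v; simp
  have hsymm : ‖(e.symm : V →L[𝕜] V)‖ ≤ ‖(e.symm : V →L[𝕜] V) - ContinuousLinearMap.id 𝕜 V‖ + 1 :=
    (norm_le_norm_sub_add _ _).trans (add_le_add_right ContinuousLinearMap.norm_id_le _)
  have hcomp : ‖(e.symm : V →L[𝕜] V) - ContinuousLinearMap.id 𝕜 V‖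
      ≤ ‖(e.symm : V →L[𝕜] V)‖ * ‖(e : V →L[𝕜] V) - ContinuousLinearMap.id 𝕜 V‖ := by
    rw [hfactor]
    exact (ContinuousLinearMap.opNorm_comp_le _ _).trans_eq (by rw [norm_sub_rev])
  nlinarith [norm_nonneg ((e : V →L[𝕜] V) - ContinuousLinearMap.id 𝕜 V)]

end NearIdentity

section InverseOnOpen

variable {𝕂 V W : Type*} [RCLike 𝕂] [NormedAddCommGroup V] [NormedSpace 𝕂 V] [CompleteSpace V]
  [NormedAddCommGroup W] [NormedSpace 𝕂 W] {f : V → W} {s : Set V}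

theorem IsOpen.image_of_hasStrictFDerivAt_equiv (hs : IsOpen s)
    (hf : ∀ x ∈ s, ∃ f' : V ≃L[𝕂] W, HasStrictFDerivAt f (f' : V →L[𝕂] W) x) :
    IsOpen (f '' s) := by
  rw [isOpen_iff_mem_nhds]
  rintro _ ⟨x, hx, rfl⟩
  obtain ⟨f', hf'⟩ := hf x hx
  rw [← hf'.map_nhds_eq_of_equiv]
  exact Filter.image_mem_map (hs.mem_nhds hx)

theorem HasStrictFDerivAt.invFunOn (hs : IsOpen s) (hinj : InjOn f s) {f' : V ≃L[𝕂] W} {x : V}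
    (hx : x ∈ s) (hf : HasStrictFDerivAt f (f' : V →L[𝕂] W) x) :
    HasStrictFDerivAt (invFunOn f s) (f'.symm : W →L[𝕂] V) (f x) :=
  hf.to_local_left_inverse (Filter.eventually_of_mem (hs.mem_nhds hx) hinj.leftInvOn_invFunOn)

theorem ContDiffOn.invFunOn {n : WithTop ℕ∞} (hs : IsOpen s) (hinj : InjOn f s)
    (hf : ContDiffOn 𝕂 n f s) (hn : n ≠ 0)
    (hf' : ∀ x ∈ s, ∃ f' : V ≃L[𝕂] W, HasStrictFDerivAt f (f' : V →L[𝕂] W) x) :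
    ContDiffOn 𝕂 n (invFunOn f s) (f '' s) := by
  rintro _ ⟨x, hx, rfl⟩
  obtain ⟨f', hf'x⟩ := hf' x hx
  have hfx := hf.contDiffAt (hs.mem_nhds hx)
  refine ContDiffAt.contDiffWithinAt <|
    (hfx.to_localInverse hf'x.hasFDerivAt hn).congr_of_eventuallyEq ?_
  exact (hfx.hasStrictFDerivAt' hf'x.hasFDerivAt hn).localInverse_unique
    (Filter.eventually_of_mem (hs.mem_nhds hx) hinj.leftInvOn_invFunOn)

theorem ContDiffAt.exists_equiv_hasStrictFDerivAt {f : V → V} {n : WithTop ℕ∞} {x : V}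
    (hf : ContDiffAt 𝕂 n f x) (hn : n ≠ 0)
    (hsmall : ‖fderiv 𝕂 f x - ContinuousLinearMap.id 𝕂 V‖ < 1) :
    ∃ e : V ≃L[𝕂] V, HasStrictFDerivAt f (e : V →L[𝕂] V) x := by
  obtain ⟨e, he⟩ := (fderiv 𝕂 f x).exists_equiv_of_norm_sub_id_lt_one hsmall
  exact ⟨e, hf.hasStrictFDerivAt' (he ▸ (hf.differentiableAt hn).hasFDerivAt) hn⟩

end InverseOnOpen

section HolderNormOne

variable {m : ℕ} {F : Type*} [NormedAddCommGroup F] [NormedSpace ℝ F] {u : E m → F}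
  {s : Set (E m)} {x : E m}

theorem hNormSet_one : hNormSet u s 1 = ckSet u s 1 := by
  simp [hNormSet]

theorem norm_iteratedFDerivWithin_one_of_isOpen (hs : IsOpen s) (hx : x ∈ s) :
    ‖iteratedFDerivWithin ℝ 1 u s x‖ = ‖fderiv ℝ u x‖ := by
  rw [norm_iteratedFDerivWithin_one u (hs.uniqueDiffWithinAt hx), fderivWithin_of_isOpen hs hx]

theorem hNorm_one_nonneg : 0 ≤ hNorm u s 1 :=
  Real.sSup_nonneg fun r hr => by
    rw [hNormSet_one] at hr
    obtain ⟨j, -, x, -, rfl⟩ := hr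
    exact norm_nonneg _

theorem mem_upperBounds_hNormSet_one (hs : IsOpen s) {c : ℝ} (h₀ : ∀ x ∈ s, ‖u x‖ ≤ c)
    (h₁ : ∀ x ∈ s, ‖fderiv ℝ u x‖ ≤ c) : c ∈ upperBounds (hNormSet u s 1) := by
  rw [hNormSet_one]
  rintro _ ⟨j, hj, x, hx, rfl⟩
  interval_cases j
  · simpa using h₀ x hx
  · simpa [norm_iteratedFDerivWithin_one_of_isOpen hs hx] using h₁ x hx

theorem hNorm_one_le (hs : IsOpen s) {c : ℝ} (hc : 0 ≤ c) (h₀ : ∀ x ∈ s, ‖u x‖ ≤ c)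
    (h₁ : ∀ x ∈ s, ‖fderiv ℝ u x‖ ≤ c) : hNorm u s 1 ≤ c :=
  Real.sSup_le (mem_upperBounds_hNormSet_one hs h₀ h₁) hc

theorem norm_le_hNorm_one (hbdd : BddAbove (hNormSet u s 1)) (hx : x ∈ s) :
    ‖u x‖ ≤ hNorm u s 1 :=
  le_csSup hbdd (by rw [hNormSet_one]; exact ⟨0, Nat.zero_le 1, x, hx, by simp⟩)

theorem norm_fderiv_le_hNorm_one (hs : IsOpen s) (hbdd : BddAbove (hNormSet u s 1))
    (hx : x ∈ s) : ‖fderiv ℝ u x‖ ≤ hNorm u s 1 :=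
  le_csSup hbdd <| by
    rw [hNormSet_one]
    exact ⟨1, le_rfl, x, hx, (norm_iteratedFDerivWithin_one_of_isOpen hs hx).symm⟩

theorem bddAbove_hNormSet_one (hs : IsOpen s) (hsb : Bornology.IsBounded s) {K : NNReal}
    (hu : LipschitzOnWith K u s) {M : ℝ} (hM : ∀ x ∈ s, ‖fderiv ℝ u x‖ ≤ M) :
    BddAbove (hNormSet u s 1) := by
  rcases s.eq_empty_or_nonempty with rfl | ⟨x₀, hx₀⟩
  · exact ⟨M, mem_upperBounds_hNormSet_one isOpen_empty (by simp) (by simp)⟩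
  refine ⟨max (‖u x₀‖ + K * Metric.diam s) M, mem_upperBounds_hNormSet_one hs
    (fun x hx => le_max_of_le_left ?_) fun x hx => le_max_of_le_right (hM x hx)⟩
  calc ‖u x‖ ≤ ‖u x₀‖ + ‖u x - u x₀‖ := norm_le_insert' _ _
    _ ≤ ‖u x₀‖ + K * ‖x - x₀‖ := add_le_add_right (hu.norm_sub_le hx hx₀) _
    _ ≤ ‖u x₀‖ + K * Metric.diam s := by
      gcongr
      rw [← dist_eq_norm]
      exact Metric.dist_le_diam_of_mem hsb hx hx₀

end HolderNormOne

theorem hNorm_invFunOn_sub_id_le {m : ℕ} {f : E m → E m} {D : Set (E m)} (hD : IsOpen D)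
    (hinj : InjOn f D) (hbdd : BddAbove (hNormSet (fun x => f x - x) D 1))
    (hf : ∀ x ∈ D, ∃ e : E m ≃L[ℝ] E m, HasStrictFDerivAt f (e : E m →L[ℝ] E m) x)
    (hsmall : ∀ x ∈ D, ‖fderiv ℝ (fun x => f x - x) x‖ ≤ 1 / 2) :
    hNorm (fun y => invFunOn f D y - y) (f '' D) 1 ≤ 2 * hNorm (fun x => f x - x) D 1 := by
  refine hNorm_one_le (hD.image_of_hasStrictFDerivAt_equiv hf)
    (mul_nonneg zero_le_two hNorm_one_nonneg) ?_ ?_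
  · rintro _ ⟨x, hx, rfl⟩
    rw [hinj.leftInvOn_invFunOn hx, norm_sub_rev]
    exact (norm_le_hNorm_one hbdd hx).trans (le_mul_of_one_le_left hNorm_one_nonneg one_le_two)
  · rintro _ ⟨x, hx, rfl⟩
    obtain ⟨e, he⟩ := hf x hx
    have hsub := he.hasFDerivAt.sub_id.fderiv
    rw [(he.invFunOn hD hinj hx).hasFDerivAt.sub_id.fderiv]
    calc ‖(e.symm : E m →L[ℝ] E m) - ContinuousLinearMap.id ℝ (E m)‖
        ≤ 2 * ‖(e : E m →L[ℝ] E m) - ContinuousLinearMap.id ℝ (E m)‖ :=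
          e.norm_symm_sub_id_le (hsub ▸ hsmall x hx)
      _ ≤ 2 * hNorm (fun x => f x - x) D 1 := by
          rw [← hsub]
          gcongr
          exact norm_fderiv_le_hNorm_one hD hbdd hx

/-- Lemma on near-identity `C¹` maps.  If `D` is a bounded domain
satisfying part (i) of the cone property with constant `C_*`, there are `C₀, C > 1`
depending only on `m, C_*` such that any `C¹` map `f : D → ℝ^m` with `|f' - Id| < 1/C₀`
on `D` is a `C¹`-diffeomorphism onto its image, satisfies
`½|p₁-p₀| ≤ |f(p₁)-f(p₀)| ≤ 2|p₁-p₀|`, and `‖f⁻¹ - id‖_{f(D),1} ≤ C ‖f - id‖_{D,1}`. -/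
theorem statement_9 (m : ℕ) (Cs : ℝ) (hCs : 1 < Cs) :
    ∃ C₀ > (1 : ℝ), ∃ C > (1 : ℝ),
      ∀ (D : Set (E m)) (f : E m → E m),
        IsOpen D → IsConnected D → Bornology.IsBounded D →
        ConePropI D Cs →
        ContDiffOn ℝ 1 f D →
        (∀ x ∈ D, ‖fderivWithin ℝ f D x - ContinuousLinearMap.id ℝ (E m)‖ < 1 / C₀) →
        -- f is a C¹ diffeomorphism from D onto D' = f(D)
        (Set.InjOn f D ∧ IsOpen (f '' D) ∧
          ContDiffOn ℝ 1 (Function.invFunOn f D) (f '' D) ∧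
          (∀ y ∈ f '' D, f (Function.invFunOn f D y) = y) ∧
          (∀ x ∈ D, Function.invFunOn f D (f x) = x)) ∧
        -- bi-Lipschitz bounds
        (∀ p₀ ∈ D, ∀ p₁ ∈ D,
            (1 / 2) * ‖p₁ - p₀‖ ≤ ‖f p₁ - f p₀‖ ∧ ‖f p₁ - f p₀‖ ≤ 2 * ‖p₁ - p₀‖) ∧
        -- C¹ bound for the inverse
        hNorm (fun y => Function.invFunOn f D y - y) (f '' D) 1 ≤
          C * hNorm (fun x => f x - x) D 1 := by
  refine ⟨2 * Cs, by linarith, 2, one_lt_two, fun D f hD _ hbdd hCP hf hder => ?_⟩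
  have hCf : ∀ x ∈ D, ContDiffAt ℝ 1 f x := fun x hx => hf.contDiffAt (hD.mem_nhds hx)
  have hdiff : ∀ x ∈ D, DifferentiableAt ℝ f x :=
    fun x hx => (hCf x hx).differentiableAt one_ne_zero
  have hsub : ∀ x ∈ D, fderiv ℝ (fun x => f x - x) x = fderiv ℝ f x - ContinuousLinearMap.id ℝ _ :=
    fun x hx => (hdiff x hx).hasFDerivAt.sub_id.fderiv
  have hsmall : ∀ x ∈ D, ‖fderiv ℝ (fun x => f x - x) x‖ ≤ 1 / (2 * Cs) := fun x hx => by
    rw [hsub x hx, ← fderivWithin_of_isOpen hD hx]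
    exact (hder x hx).le
  have hhalf : ∀ x ∈ D, ‖fderiv ℝ (fun x => f x - x) x‖ ≤ 1 / 2 :=
    fun x hx => (hsmall x hx).trans (by gcongr; linarith)
  have hlip : LipschitzOnWith (1 / 2) (fun x => f x - x) D :=
    lipschitzOnWith_iff_norm_sub_le.2 fun x hx y hy => by
      have := hCP.norm_image_sub_le_of_norm_fderiv_le
        (fun z hz => (hdiff z hz).sub differentiableAt_id) hsmall hy hx
      rwa [show Cs * (1 / (2 * Cs)) = 1 / 2 by field_simp] at this
  have hinj : InjOn f D := hlip.injOn_of_sub_id (by norm_num)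
  have hequiv : ∀ x ∈ D, ∃ e : E m ≃L[ℝ] E m, HasStrictFDerivAt f (e : E m →L[ℝ] E m) x :=
    fun x hx => (hCf x hx).exists_equiv_hasStrictFDerivAt one_ne_zero
      (by rw [← hsub x hx]; linarith [hhalf x hx])
  exact ⟨⟨hinj, hD.image_of_hasStrictFDerivAt_equiv hequiv, hf.invFunOn hD hinj one_ne_zero hequiv,
    fun y hy => (surjOn_image f D).rightInvOn_invFunOn hy, fun x hx => hinj.leftInvOn_invFunOn hx⟩,
    fun p₀ h₀ p₁ h₁ => hlip.half_mul_norm_sub_le_and_norm_sub_le_two_mul h₀ h₁,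
    hNorm_invFunOn_sub_id_le hD hinj (bddAbove_hNormSet_one hD hbdd hlip hsmall) hequiv hhalf⟩

end
end
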